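/- Suppose T : X → ℝ^m is continuous and uniformly injective with class-K∞ modulus α, satisfies T(f(x)) = A T(x) + B h(x) on X, and ρ(A) < 1, where X is forward invariant from X₀ under f. Then there exists T* : ℝ^m → ℝ^n such that for all x₀ ∈ X₀ and ξ₀ ∈ ℝ^m, defining ξ_{k+1} = A ξ_k + B h(x_k) and x_{k+1} = f(x_k), one has |T*(ξ_k) − x_k| → 0 as k → ∞; i.e., x̂_k = T*(ξ_k) is an asymptotic observer. -/

import Mathlib

noncomputable def specRad {m : ℕ} (A : Matrix (Fin m) (Fin m) ℝ) : ℝ :=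
  sSup ((fun z : ℂ => ‖z‖) '' spectrum ℂ (A.map Complex.ofReal))

def mulVecE {m p : ℕ} (A : Matrix (Fin m) (Fin p) ℝ) (x : EuclideanSpace ℝ (Fin p)) :
    EuclideanSpace ℝ (Fin m) := WithLp.toLp 2 (A.mulVec x)

def IsKInfty (α : ℝ → ℝ) : Prop :=
  ContinuousOn α (Set.Ici 0) ∧ StrictMonoOn α (Set.Ici 0) ∧ α 0 = 0 ∧
    Filter.Tendsto α Filter.atTop Filter.atTop

open Filter Matrix

section PowAux

attribute [local instance] Matrix.linftyOpNormedRing Matrix.linftyOpNormedAlgebra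

lemma entry_norm_le {m : ℕ} (M : Matrix (Fin m) (Fin m) ℂ) (i j : Fin m) :
    ‖M i j‖ ≤ ‖M‖ := by
  have h1 : ‖M i j‖₊ ≤ ∑ j' : Fin m, ‖M i j'‖₊ :=
    Finset.single_le_sum (f := fun j' => ‖M i j'‖₊) (fun _ _ => zero_le) (Finset.mem_univ j)
  have h2 : (∑ j' : Fin m, ‖M i j'‖₊) ≤ ‖M‖₊ := by
    rw [Matrix.linfty_opNNNorm_def]
    exact Finset.le_sup (f := fun i => ∑ j' : Fin m, ‖M i j'‖₊) (Finset.mem_univ i)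
  exact_mod_cast h1.trans h2

lemma norm_pow_tendsto {m : ℕ} [Nonempty (Fin m)]
    (A : Matrix (Fin m) (Fin m) ℝ) (hA : specRad A < 1) :
    Tendsto (fun k => ‖(A.map Complex.ofReal) ^ k‖) atTop (nhds 0) := by
  haveI : CompleteSpace (Matrix (Fin m) (Fin m) ℂ) := FiniteDimensional.complete ℂ _
  set a := A.map Complex.ofReal with ha
  have hsp : spectralRadius ℂ a < 1 := by
    have hb : BddAbove ((fun z : ℂ => ‖z‖) '' spectrum ℂ a) :=
      ((spectrum.isCompact a).image continuous_norm).bddAbove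
    have h1 : ∀ z ∈ spectrum ℂ a, ‖z‖₊ < (1 : NNReal) := by
      intro z hz
      have h2 : ‖z‖ ≤ specRad A := le_csSup hb ⟨z, hz, rfl⟩
      have h3 : ‖z‖ < 1 := lt_of_le_of_lt h2 hA
      rw [← NNReal.coe_lt_coe]
      simpa [coe_nnnorm] using h3
    simpa using spectrum.spectralRadius_lt_of_forall_lt a h1
  obtain ⟨c, hc1, hc2⟩ := exists_between hsp
  obtain ⟨c', rfl, -⟩ := ENNReal.lt_iff_exists_coe.1 hc2
  have hc'1 : (c' : ℝ) < 1 := by exact_mod_cast hc2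
  have hev : ∀ᶠ k : ℕ in atTop, (‖a ^ k‖₊ : ENNReal) ^ (1 / (k : ℝ)) < (c' : ENNReal) :=
    (spectrum.pow_nnnorm_pow_one_div_tendsto_nhds_spectralRadius a).eventually_lt_const hc1
  have hev2 : ∀ᶠ k : ℕ in atTop, ‖a ^ k‖ ≤ (c' : ℝ) ^ k := by
    filter_upwards [hev, eventually_ge_atTop 1] with k hk hk1
    have hk0 : (1 / (k : ℝ)) * (k : ℝ) = 1 := by
      field_simp
    have h4 : ((‖a ^ k‖₊ : ENNReal) ^ (1 / (k : ℝ))) ^ (k : ℝ) ≤ (c' : ENNReal) ^ (k : ℝ) :=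
      ENNReal.rpow_le_rpow hk.le (by positivity)
    rw [← ENNReal.rpow_mul, hk0, ENNReal.rpow_one, ENNReal.rpow_natCast, ← ENNReal.coe_pow,
      ENNReal.coe_le_coe] at h4
    calc ‖a ^ k‖ = ((‖a ^ k‖₊ : NNReal) : ℝ) := (coe_nnnorm _).symm
      _ ≤ ((c' ^ k : NNReal) : ℝ) := by exact_mod_cast h4
      _ = (c' : ℝ) ^ k := by push_cast; ring
  exact squeeze_zero' (Eventually.of_forall fun k => norm_nonneg _) hev2
    (tendsto_pow_atTop_nhds_zero_of_lt_one c'.coe_nonneg hc'1)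

lemma mulVec_norm_tendsto {m : ℕ} (A : Matrix (Fin m) (Fin m) ℝ) (hA : specRad A < 1)
    (v : EuclideanSpace ℝ (Fin m)) :
    Tendsto (fun k => ‖mulVecE (A ^ k) v‖) atTop (nhds 0) := by
  rcases Nat.eq_zero_or_pos m with rfl | hm
  · have hz : (fun k => ‖mulVecE (A ^ k) v‖) = fun _ => (0 : ℝ) := by
      funext k
      simp [EuclideanSpace.norm_eq]
    rw [hz]
    exact tendsto_const_nhds
  · haveI : Nonempty (Fin m) := ⟨⟨0, hm⟩⟩
    have hnorm := norm_pow_tendsto A hA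
    have hentry : ∀ i j : Fin m, Tendsto (fun k => (A ^ k) i j) atTop (nhds 0) := by
      intro i j
      refine squeeze_zero_norm (fun k => ?_) hnorm
      have hmap : (A.map Complex.ofReal) ^ k = (A ^ k).map Complex.ofReal := by
        have hmp := map_pow (Complex.ofRealHom.mapMatrix) A k
        exact hmp.symm
      calc ‖(A ^ k) i j‖ = ‖((A.map Complex.ofReal) ^ k) i j‖ := by
            rw [hmap]; simp [Matrix.map_apply]
        _ ≤ ‖(A.map Complex.ofReal) ^ k‖ := entry_norm_le _ i j
    have hcoord : ∀ i, Tendsto (fun k => ∑ j, (A ^ k) i j * v j) atTop (nhds 0) := by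
      intro i
      have := tendsto_finset_sum Finset.univ (fun j (_ : j ∈ Finset.univ) =>
        (hentry i j).mul_const (v j))
      simpa using this
    have hsum : Tendsto (fun k => ∑ i, (∑ j, (A ^ k) i j * v j) ^ 2) atTop (nhds 0) := by
      have := tendsto_finset_sum Finset.univ (fun i (_ : i ∈ Finset.univ) =>
        ((hcoord i).mul (hcoord i)))
      simpa [pow_two] using this
    have hs : Tendsto (fun k => Real.sqrt (∑ i, (∑ j, (A ^ k) i j * v j) ^ 2)) atTop
        (nhds 0) := by
      have := hsum.sqrt
      simpa using this
    have hfun : (fun k => ‖mulVecE (A ^ k) v‖)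
        = fun k => Real.sqrt (∑ i, (∑ j, (A ^ k) i j * v j) ^ 2) := by
      funext k
      rw [EuclideanSpace.norm_eq]
      congr 1
      refine Finset.sum_congr rfl fun i _ => ?_
      rw [Real.norm_eq_abs, sq_abs]
      rfl
    rw [hfun]
    exact hs

end PowAux

lemma exists_approx_inverse {n m : ℕ} (X : Set (EuclideanSpace ℝ (Fin n)))
    (T : EuclideanSpace ℝ (Fin n) → EuclideanSpace ℝ (Fin m))
    (α : ℝ → ℝ) (hα : IsKInfty α)
    (hTinj : ∀ x₁ ∈ X, ∀ x₂ ∈ X, ‖x₁ - x₂‖ ≤ α ‖T x₁ - T x₂‖)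
    (ξ : EuclideanSpace ℝ (Fin m)) :
    ∃ xhat, ∀ x ∈ X, ‖xhat - x‖ ≤ α (3 * ‖ξ - T x‖) := by
  obtain ⟨hαc, hαm, hα0, -⟩ := hα
  have hmono : ∀ s t : ℝ, 0 ≤ s → s ≤ t → α s ≤ α t := fun s t hs hst =>
    hαm.monotoneOn (Set.mem_Ici.2 hs) (Set.mem_Ici.2 (hs.trans hst)) hst
  by_cases hX : (T '' X).Nonempty
  swap
  · exact ⟨0, fun x hx => absurd ⟨x, hx, rfl⟩ (fun h => hX ⟨T x, h⟩)⟩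
  set d := Metric.infDist ξ (T '' X) with hdd
  have hd0 : 0 ≤ d := Metric.infDist_nonneg
  have hchoice : ∀ j : ℕ, ∃ x', x' ∈ X ∧ dist ξ (T x') < d + 1 / ((j : ℝ) + 1) := by
    intro j
    have hpos : (0 : ℝ) < 1 / ((j : ℝ) + 1) := by positivity
    have hlt : Metric.infDist ξ (T '' X) < d + 1 / ((j : ℝ) + 1) := by
      rw [← hdd]; linarith
    obtain ⟨y, hy, hyd⟩ := (Metric.infDist_lt_iff hX).1 hlt
    obtain ⟨x', hx', rfl⟩ := hy
    exact ⟨x', hx', hyd⟩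
  choose u hu hud using hchoice
  have key : ∀ j : ℕ, ∀ x ∈ X, ‖u j - x‖ ≤ α (d + 1 / ((j : ℝ) + 1) + ‖ξ - T x‖) := by
    intro j x hx
    have h1 : ‖T (u j) - T x‖ ≤ d + 1 / ((j : ℝ) + 1) + ‖ξ - T x‖ := by
      have h2 : dist (T (u j)) (T x) ≤ dist (T (u j)) ξ + dist ξ (T x) := dist_triangle _ _ _
      have h3 : dist (T (u j)) ξ < d + 1 / ((j : ℝ) + 1) := by
        rw [dist_comm]; exact hud j
      simp only [dist_eq_norm] at h2 h3
      linarith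
    exact (hTinj _ (hu j) _ hx).trans (hmono _ _ (norm_nonneg _) h1)
  by_cases hd : d = 0
  · have hcauchy : CauchySeq u := by
      rw [Metric.cauchySeq_iff]
      intro ε hε
      obtain ⟨δ, hδ0, hδ⟩ := Metric.continuousWithinAt_iff.1 (hαc 0 Set.self_mem_Ici) ε hε
      obtain ⟨N, hN⟩ := exists_nat_gt (2 / δ)
      refine ⟨N, fun i hi j hj => ?_⟩
      have hij : ‖T (u i) - T (u j)‖ < δ := by
        have h2 : dist (T (u i)) (T (u j)) ≤ dist (T (u i)) ξ + dist ξ (T (u j)) :=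
          dist_triangle _ _ _
        have h3 : dist (T (u i)) ξ < 1 / ((i : ℝ) + 1) := by
          rw [dist_comm]; have := hud i; rw [hd] at this; linarith
        have h4 : dist ξ (T (u j)) < 1 / ((j : ℝ) + 1) := by
          have := hud j; rw [hd] at this; linarith
        have h5 : 1 / ((i : ℝ) + 1) ≤ 1 / ((N : ℝ) + 1) := by
          apply one_div_le_one_div_of_le (by positivity)
          have : (N : ℝ) ≤ (i : ℝ) := by exact_mod_cast hi
          linarith
        have h6 : 1 / ((j : ℝ) + 1) ≤ 1 / ((N : ℝ) + 1) := by
          apply one_div_le_one_div_of_le (by positivity)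
          have : (N : ℝ) ≤ (j : ℝ) := by exact_mod_cast hj
          linarith
        have h7 : 2 / ((N : ℝ) + 1) < δ := by
          rw [div_lt_iff₀ (by positivity)]
          rw [div_lt_iff₀ hδ0] at hN
          nlinarith
        simp only [dist_eq_norm] at h2 h3 h4
        have h8 : 2 / ((N : ℝ) + 1) = 1 / ((N : ℝ) + 1) + 1 / ((N : ℝ) + 1) := by ring
        linarith
      have h8 : dist (α ‖T (u i) - T (u j)‖) (α 0) < ε := by
        apply hδ (Set.mem_Ici.2 (norm_nonneg _))
        rw [Real.dist_eq, sub_zero, abs_of_nonneg (norm_nonneg _)]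
        exact hij
      rw [hα0, Real.dist_eq, sub_zero] at h8
      calc dist (u i) (u j) = ‖u i - u j‖ := dist_eq_norm _ _
        _ ≤ α ‖T (u i) - T (u j)‖ := hTinj _ (hu i) _ (hu j)
        _ ≤ |α ‖T (u i) - T (u j)‖| := le_abs_self _
        _ < ε := h8
    obtain ⟨ℓ, hℓ⟩ := cauchySeq_tendsto_of_complete hcauchy
    refine ⟨ℓ, fun x hx => ?_⟩
    have hbd : Tendsto (fun j => ‖u j - x‖) atTop (nhds ‖ℓ - x‖) :=
      ((hℓ.sub tendsto_const_nhds).norm)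
    have harg : Tendsto (fun j : ℕ => d + 1 / ((j : ℝ) + 1) + ‖ξ - T x‖) atTop
        (nhdsWithin ‖ξ - T x‖ (Set.Ici (0 : ℝ))) := by
      apply tendsto_nhdsWithin_of_tendsto_nhds_of_eventually_within
      · have h9 : Tendsto (fun j : ℕ => 1 / ((j : ℝ) + 1)) atTop (nhds 0) :=
          tendsto_one_div_add_atTop_nhds_zero_nat
        have h10 := (h9.const_add d).add_const ‖ξ - T x‖
        simpa [hd] using h10
      · exact Eventually.of_forall fun j => Set.mem_Ici.2 (by positivity)
    have hrhs : Tendsto (fun j : ℕ => α (d + 1 / ((j : ℝ) + 1) + ‖ξ - T x‖)) atTop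
        (nhds (α ‖ξ - T x‖)) :=
      ((hαc _ (Set.mem_Ici.2 (norm_nonneg _))).tendsto).comp harg
    have hle : ‖ℓ - x‖ ≤ α ‖ξ - T x‖ :=
      le_of_tendsto_of_tendsto' hbd hrhs (fun j => key j x hx)
    exact hle.trans (hmono _ _ (norm_nonneg _) (by nlinarith [norm_nonneg (ξ - T x)]))
  · have hdpos : 0 < d := lt_of_le_of_ne hd0 (Ne.symm hd)
    obtain ⟨N, hN⟩ := exists_nat_gt (1 / d)
    refine ⟨u N, fun x hx => ?_⟩
    have hdle : d ≤ ‖ξ - T x‖ := by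
      have h0 := Metric.infDist_le_dist_of_mem (x := ξ) (Set.mem_image_of_mem T hx)
      rwa [dist_eq_norm] at h0
    have h1 : 1 / ((N : ℝ) + 1) ≤ d := by
      rw [div_le_iff₀ (by positivity)]
      rw [div_lt_iff₀ hdpos] at hN
      nlinarith
    have harg : ‖T (u N) - T x‖ ≤ 3 * ‖ξ - T x‖ := by
      have h2 : dist (T (u N)) (T x) ≤ dist (T (u N)) ξ + dist ξ (T x) := dist_triangle _ _ _
      have h3 : dist (T (u N)) ξ < d + 1 / ((N : ℝ) + 1) := by
        rw [dist_comm]; exact hud N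
      simp only [dist_eq_norm] at h2 h3
      linarith
    exact (hTinj _ (hu N) _ hx).trans (hmono _ _ (norm_nonneg _) harg)

/-- a continuous, uniformly injective solution `T` of the functional
equation with `ρ(A) < 1` yields an asymptotic observer `x̂_k = T*(ξ_k)`. -/
theorem stmt18 {n m p : ℕ}
    (X₀ X : Set (EuclideanSpace ℝ (Fin n))) (hX₀X : X₀ ⊆ X)
    (f : EuclideanSpace ℝ (Fin n) → EuclideanSpace ℝ (Fin n))
    (h : EuclideanSpace ℝ (Fin n) → EuclideanSpace ℝ (Fin p))
    (hinv : ∀ x₀ ∈ X₀, ∀ k : ℕ, f^[k] x₀ ∈ X)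
    (A : Matrix (Fin m) (Fin m) ℝ) (hA : specRad A < 1)
    (B : Matrix (Fin m) (Fin p) ℝ)
    (T : EuclideanSpace ℝ (Fin n) → EuclideanSpace ℝ (Fin m))
    (hTc : ContinuousOn T X)
    (α : ℝ → ℝ) (hα : IsKInfty α)
    (hTinj : ∀ x₁ ∈ X, ∀ x₂ ∈ X, ‖x₁ - x₂‖ ≤ α ‖T x₁ - T x₂‖)
    (hTeq : ∀ x ∈ X, T (f x) = mulVecE A (T x) + mulVecE B (h x)) :
    ∃ Tstar : EuclideanSpace ℝ (Fin m) → EuclideanSpace ℝ (Fin n),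
      ∀ x₀ ∈ X₀, ∀ ξ₀ : EuclideanSpace ℝ (Fin m),
        ∀ x : ℕ → EuclideanSpace ℝ (Fin n), ∀ ξ : ℕ → EuclideanSpace ℝ (Fin m),
          x 0 = x₀ → ξ 0 = ξ₀ →
          (∀ k, x (k + 1) = f (x k)) →
          (∀ k, ξ (k + 1) = mulVecE A (ξ k) + mulVecE B (h (x k))) →
          Filter.Tendsto (fun k => ‖Tstar (ξ k) - x k‖) Filter.atTop (nhds 0) := by
  choose Tstar hTstar using fun ξ => exists_approx_inverse X T α hα hTinj ξ
  refine ⟨Tstar, ?_⟩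
  intro x₀ hx₀ ξ₀ x ξ hx0 hξ0 hxrec hξrec
  have hxk : ∀ k, x k = f^[k] x₀ := by
    intro k
    induction k with
    | zero => simpa using hx0
    | succ k ih => rw [hxrec, ih, Function.iterate_succ_apply']
  have hxX : ∀ k, x k ∈ X := fun k => (hxk k) ▸ hinv x₀ hx₀ k
  set e : ℕ → EuclideanSpace ℝ (Fin m) := fun k => ξ k - T (x k) with he_def
  have he : ∀ k, e k = mulVecE (A ^ k) (e 0) := by
    intro k
    induction k with
    | zero =>
      show e 0 = mulVecE (A ^ 0) (e 0)
      simp [mulVecE]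
    | succ k ih =>
      have hk : e (k + 1) = mulVecE A (e k) := by
        show ξ (k + 1) - T (x (k + 1)) = mulVecE A (e k)
        rw [hξrec, hxrec, hTeq (x k) (hxX k)]
        show mulVecE A (ξ k) + mulVecE B (h (x k)) -
          (mulVecE A (T (x k)) + mulVecE B (h (x k))) = mulVecE A (ξ k - T (x k))
        have hsub : mulVecE A (ξ k - T (x k)) = mulVecE A (ξ k) - mulVecE A (T (x k)) := by
          simp [mulVecE, Matrix.mulVec_sub]
        rw [hsub]
        abel
      rw [hk, ih]
      simp [mulVecE, Matrix.mulVec_mulVec, ← pow_succ']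
  have hen : Tendsto (fun k => ‖e k‖) atTop (nhds 0) := by
    have h1 := mulVec_norm_tendsto A hA (e 0)
    have h2 : (fun k => ‖e k‖) = fun k => ‖mulVecE (A ^ k) (e 0)‖ := by
      funext k; rw [he k]
    rw [h2]
    exact h1
  have h3e : Tendsto (fun k => 3 * ‖e k‖) atTop (nhdsWithin (0 : ℝ) (Set.Ici 0)) := by
    apply tendsto_nhdsWithin_of_tendsto_nhds_of_eventually_within
    · simpa using hen.const_mul 3
    · exact Eventually.of_forall fun k => Set.mem_Ici.2 (by positivity)
  have hcont : Tendsto α (nhdsWithin (0 : ℝ) (Set.Ici 0)) (nhds 0) := by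
    have := (hα.1 0 Set.self_mem_Ici).tendsto
    rwa [hα.2.2.1] at this
  have hub : Tendsto (fun k => α (3 * ‖e k‖)) atTop (nhds 0) := hcont.comp h3e
  exact squeeze_zero (fun k => norm_nonneg _) (fun k => hTstar (ξ k) (x k) (hxX k)) hub
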